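/- arXiv:math/0407153 — 2 statements merged into one kernel-verified Lean document; each statement's English description precedes it below -/
import Mathlib

section
/- Let Ω ⊆ ℝ² be open and connected, let f : Ω → ℝ³ be an immersion in conformal curvature coordinates with conformal factor ρ, unit normal ν and principal curvatures κ₁, κ₂ with κ₁ + κ₂ constant on Ω, and let u : Ω → ℝ be a Jacobi field. Then at every point of Ω: −(∂₁∂₁(uν) + ∂₂∂₂(uν)) = 2κ₁·∂₁u·∂₁f + 2κ₂·∂₂u·∂₂f + 2ρ²(κ₁² + κ₂²)·u·ν. -/
open scoped RealInnerProductSpace ContDiff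

/-! Weingarten's equations `∂ᵢν = -κᵢ ∂ᵢf` and the Codazzi equation `ρ ∂₁κ₂ = ∂₁ρ (κ₁ - κ₂)`,
together with `∂(κ₁ + κ₂) = 0`, make the tangential components of `Δν` vanish, so that
`Δν = -ρ² (κ₁² + κ₂²) ν`. Expanding `Δ(uν) = (Δu) ν + 2 ∂₁u ∂₁ν + 2 ∂₂u ∂₂ν + u Δν` and
substituting the Jacobi equation for `Δu` gives the formula.

Each identity in the second coordinate is the one in the first coordinate for the data composed
with `Prod.swap`, which is again in conformal curvature coordinates with `κ₁` and `κ₂` exchanged. -/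

/-- First partial derivative (in the first coordinate direction of `ℝ × ℝ`). -/
noncomputable def pd1 {E : Type*} [NormedAddCommGroup E] [NormedSpace ℝ E]
    (f : ℝ × ℝ → E) : ℝ × ℝ → E := fun p => fderiv ℝ f p (1, 0)

/-- Second partial derivative (in the second coordinate direction of `ℝ × ℝ`). -/
noncomputable def pd2 {E : Type*} [NormedAddCommGroup E] [NormedSpace ℝ E]
    (f : ℝ × ℝ → E) : ℝ × ℝ → E := fun p => fderiv ℝ f p (0, 1)

/-- `f : Ω → ℝ³` is an immersion in conformal curvature coordinates, with conformal
factor `ρ`, unit normal `ν` and principal curvatures `κ₁, κ₂`. -/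
structure IsCCC (Ω : Set (ℝ × ℝ)) (f ν : ℝ × ℝ → EuclideanSpace ℝ (Fin 3))
    (ρ κ₁ κ₂ : ℝ × ℝ → ℝ) : Prop where
  smooth_f : ContDiffOn ℝ ∞ f Ω
  smooth_ρ : ContDiffOn ℝ ∞ ρ Ω
  smooth_ν : ContDiffOn ℝ ∞ ν Ω
  smooth_κ₁ : ContDiffOn ℝ ∞ κ₁ Ω
  smooth_κ₂ : ContDiffOn ℝ ∞ κ₂ Ω
  ρ_pos : ∀ p ∈ Ω, 0 < ρ p
  g11 : ∀ p ∈ Ω, ⟪pd1 f p, pd1 f p⟫ = ρ p ^ 2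
  g22 : ∀ p ∈ Ω, ⟪pd2 f p, pd2 f p⟫ = ρ p ^ 2
  g12 : ∀ p ∈ Ω, ⟪pd1 f p, pd2 f p⟫ = 0
  nu_unit : ∀ p ∈ Ω, ⟪ν p, ν p⟫ = 1
  nu_f1 : ∀ p ∈ Ω, ⟪ν p, pd1 f p⟫ = 0
  nu_f2 : ∀ p ∈ Ω, ⟪ν p, pd2 f p⟫ = 0
  h12 : ∀ p ∈ Ω, ⟪ν p, pd1 (pd2 f) p⟫ = 0
  h11 : ∀ p ∈ Ω, ⟪ν p, pd1 (pd1 f) p⟫ = ρ p ^ 2 * κ₁ p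
  h22 : ∀ p ∈ Ω, ⟪ν p, pd2 (pd2 f) p⟫ = ρ p ^ 2 * κ₂ p

section Calculus

variable {E : Type*} [NormedAddCommGroup E] [NormedSpace ℝ E]
  {Ω : Set (ℝ × ℝ)} {g : ℝ × ℝ → E} {p : ℝ × ℝ}

theorem ContDiffOn.differentiableAt_of_isOpen (hg : ContDiffOn ℝ ∞ g Ω) (hΩ : IsOpen Ω)
    (hp : p ∈ Ω) : DifferentiableAt ℝ g p :=
  (hg.contDiffAt (hΩ.mem_nhds hp)).differentiableAt (by simp)

theorem ContDiffOn.fderiv_apply_const (hg : ContDiffOn ℝ ∞ g Ω) (hΩ : IsOpen Ω) (v : ℝ × ℝ) :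
    ContDiffOn ℝ ∞ (fun q => fderiv ℝ g q v) Ω :=
  (hg.fderiv_of_isOpen hΩ (by simp)).clm_apply contDiffOn_const

theorem ContDiffOn.pd1 (hg : ContDiffOn ℝ ∞ g Ω) (hΩ : IsOpen Ω) : ContDiffOn ℝ ∞ (pd1 g) Ω :=
  hg.fderiv_apply_const hΩ (1, 0)

theorem ContDiffOn.pd2 (hg : ContDiffOn ℝ ∞ g Ω) (hΩ : IsOpen Ω) : ContDiffOn ℝ ∞ (pd2 g) Ω :=
  hg.fderiv_apply_const hΩ (0, 1)

theorem ContDiffOn.comp_swap (hg : ContDiffOn ℝ ∞ g Ω) :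
    ContDiffOn ℝ ∞ (g ∘ Prod.swap) (Prod.swap ⁻¹' Ω) :=
  hg.comp_continuousLinearMap (ContinuousLinearEquiv.prodComm ℝ ℝ ℝ : ℝ × ℝ →L[ℝ] ℝ × ℝ)

theorem pd1_comp_swap (g : ℝ × ℝ → E) : pd1 (g ∘ Prod.swap) = pd2 g ∘ Prod.swap := by
  ext p
  exact congrArg (· (1, 0)) ((ContinuousLinearEquiv.prodComm ℝ ℝ ℝ).comp_right_fderiv (f := g))

theorem pd2_comp_swap (g : ℝ × ℝ → E) : pd2 (g ∘ Prod.swap) = pd1 g ∘ Prod.swap := by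
  ext p
  exact congrArg (· (0, 1)) ((ContinuousLinearEquiv.prodComm ℝ ℝ ℝ).comp_right_fderiv (f := g))

theorem pd1_pd2_comm (hg : ContDiffOn ℝ ∞ g Ω) (hΩ : IsOpen Ω) (hp : p ∈ Ω) :
    pd1 (pd2 g) p = pd2 (pd1 g) p := by
  have hdg : DifferentiableAt ℝ (fderiv ℝ g) p :=
    (hg.fderiv_of_isOpen hΩ (by simp)).differentiableAt_of_isOpen hΩ hp
  have hsymm := (hg.contDiffAt (hΩ.mem_nhds hp)).isSymmSndFDerivAt
    (by simp; exact WithTop.coe_le_coe.2 le_top)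
  show fderiv ℝ (fun q => fderiv ℝ g q (0, 1)) p (1, 0)
    = fderiv ℝ (fun q => fderiv ℝ g q (1, 0)) p (0, 1)
  rw [fderiv_clm_apply hdg (differentiableAt_const _),
    fderiv_clm_apply hdg (differentiableAt_const _)]
  simpa using hsymm (1, 0) (0, 1)

theorem fderiv_eq_of_eqOn {g' : ℝ × ℝ → E} (hΩ : IsOpen Ω) (hp : p ∈ Ω) (h : Set.EqOn g g' Ω) :
    fderiv ℝ g p = fderiv ℝ g' p :=
  (Filter.eventuallyEq_of_mem (hΩ.mem_nhds hp) h).fderiv_eq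

theorem fderiv_fderiv_smul_apply {c : ℝ × ℝ → ℝ} (hc : ContDiffOn ℝ ∞ c Ω)
    (hg : ContDiffOn ℝ ∞ g Ω) (hΩ : IsOpen Ω) (hp : p ∈ Ω) (v : ℝ × ℝ) :
    fderiv ℝ (fun q => fderiv ℝ (fun r => c r • g r) q v) p v
      = fderiv ℝ (fun q => fderiv ℝ c q v) p v • g p + (2 * fderiv ℝ c p v) • fderiv ℝ g p v
        + c p • fderiv ℝ (fun q => fderiv ℝ g q v) p v := by
  have dc := hc.differentiableAt_of_isOpen hΩ hp
  have dg := hg.differentiableAt_of_isOpen hΩ hp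
  have dc' := (hc.fderiv_apply_const hΩ v).differentiableAt_of_isOpen hΩ hp
  have dg' := (hg.fderiv_apply_const hΩ v).differentiableAt_of_isOpen hΩ hp
  have hfirst : Set.EqOn (fun q => fderiv ℝ (fun r => c r • g r) q v)
      (fun q => c q • fderiv ℝ g q v + fderiv ℝ c q v • g q) Ω := fun q hq => by
    simp [fderiv_fun_smul (hc.differentiableAt_of_isOpen hΩ hq)
      (hg.differentiableAt_of_isOpen hΩ hq)]
  rw [fderiv_eq_of_eqOn hΩ hp hfirst, fderiv_fun_add (dc.fun_smul dg') (dc'.fun_smul dg),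
    fderiv_fun_smul dc dg', fderiv_fun_smul dc' dg]
  simp only [add_apply, smul_apply, ContinuousLinearMap.smulRight_apply]
  module

variable {F : Type*} [NormedAddCommGroup F] [InnerProductSpace ℝ F]

theorem fderiv_inner_apply_of_eqOn {a b : ℝ × ℝ → F} {φ : ℝ × ℝ → ℝ} (hΩ : IsOpen Ω)
    (hp : p ∈ Ω) (ha : DifferentiableAt ℝ a p) (hb : DifferentiableAt ℝ b p)
    (h : ∀ q ∈ Ω, ⟪a q, b q⟫ = φ q) (v : ℝ × ℝ) :
    ⟪a p, fderiv ℝ b p v⟫ + ⟪fderiv ℝ a p v, b p⟫ = fderiv ℝ φ p v := by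
  rw [← fderiv_inner_apply ℝ ha hb, fderiv_eq_of_eqOn hΩ hp h]

theorem fderiv_inner_apply_of_eqOn_const {a b : ℝ × ℝ → F} {c : ℝ} (hΩ : IsOpen Ω)
    (hp : p ∈ Ω) (ha : DifferentiableAt ℝ a p) (hb : DifferentiableAt ℝ b p)
    (h : ∀ q ∈ Ω, ⟪a q, b q⟫ = c) (v : ℝ × ℝ) :
    ⟪a p, fderiv ℝ b p v⟫ + ⟪fderiv ℝ a p v, b p⟫ = 0 := by
  simpa using fderiv_inner_apply_of_eqOn hΩ hp ha hb h v

theorem inner_fderiv_apply_of_eqOn_sq {a : ℝ × ℝ → F} {ρ : ℝ × ℝ → ℝ} (hΩ : IsOpen Ω)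
    (hp : p ∈ Ω) (ha : DifferentiableAt ℝ a p) (hρ : DifferentiableAt ℝ ρ p)
    (h : ∀ q ∈ Ω, ⟪a q, a q⟫ = ρ q ^ 2) (v : ℝ × ℝ) :
    ⟪a p, fderiv ℝ a p v⟫ = ρ p * fderiv ℝ ρ p v := by
  have h' := fderiv_inner_apply_of_eqOn hΩ hp ha ha h v
  rw [real_inner_comm (a p), fderiv_fun_pow 2 hρ] at h'
  simp only [smul_apply, nsmul_eq_mul] at h'
  linear_combination h' / 2

theorem ext_inner_of_pairwise_inner_eq_zero {ι : Type*} [Fintype ι] [Nonempty ι]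
    [FiniteDimensional ℝ F] {b : ι → F} (hb : ∀ i, b i ≠ 0)
    (horth : Pairwise fun i j => ⟪b i, b j⟫ = 0) (hcard : Fintype.card ι = Module.finrank ℝ F)
    {x y : F} (h : ∀ i, ⟪b i, x⟫ = ⟪b i, y⟫) : x = y := by
  let B := basisOfLinearIndependentOfCardEqFinrank
    (linearIndependent_of_ne_zero_of_inner_eq_zero hb horth) hcard
  exact InnerProductSpace.ext_inner_left_basis B (by simpa [B] using h)

end Calculus

namespace IsCCC

variable {Ω : Set (ℝ × ℝ)} {f ν : ℝ × ℝ → EuclideanSpace ℝ (Fin 3)} {ρ κ₁ κ₂ : ℝ × ℝ → ℝ}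
  {p : ℝ × ℝ}

theorem swap (hccc : IsCCC Ω f ν ρ κ₁ κ₂) (hΩ : IsOpen Ω) :
    IsCCC (Prod.swap ⁻¹' Ω) (f ∘ Prod.swap) (ν ∘ Prod.swap) (ρ ∘ Prod.swap) (κ₂ ∘ Prod.swap)
      (κ₁ ∘ Prod.swap) where
  smooth_f := hccc.smooth_f.comp_swap
  smooth_ρ := hccc.smooth_ρ.comp_swap
  smooth_ν := hccc.smooth_ν.comp_swap
  smooth_κ₁ := hccc.smooth_κ₂.comp_swap
  smooth_κ₂ := hccc.smooth_κ₁.comp_swap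
  ρ_pos q hq := hccc.ρ_pos _ hq
  g11 q hq := by simpa [pd1_comp_swap] using hccc.g22 _ hq
  g22 q hq := by simpa [pd2_comp_swap] using hccc.g11 _ hq
  g12 q hq := by simpa [pd1_comp_swap, pd2_comp_swap, real_inner_comm] using hccc.g12 _ hq
  nu_unit q hq := hccc.nu_unit _ hq
  nu_f1 q hq := by simpa [pd1_comp_swap] using hccc.nu_f2 _ hq
  nu_f2 q hq := by simpa [pd2_comp_swap] using hccc.nu_f1 _ hq
  h12 q hq := by
    simpa [pd1_comp_swap, pd2_comp_swap, ← pd1_pd2_comm hccc.smooth_f hΩ hq] using hccc.h12 _ hq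
  h11 q hq := by simpa [pd1_comp_swap] using hccc.h22 _ hq
  h22 q hq := by simpa [pd2_comp_swap] using hccc.h11 _ hq

theorem ext_frame (hccc : IsCCC Ω f ν ρ κ₁ κ₂) (hp : p ∈ Ω) {x y : EuclideanSpace ℝ (Fin 3)}
    (h₁ : ⟪pd1 f p, x⟫ = ⟪pd1 f p, y⟫) (h₂ : ⟪pd2 f p, x⟫ = ⟪pd2 f p, y⟫)
    (h₃ : ⟪ν p, x⟫ = ⟪ν p, y⟫) : x = y := by
  have hρ := hccc.ρ_pos p hp
  have hb : ∀ i, ![pd1 f p, pd2 f p, ν p] i ≠ 0 := by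
    intro i h
    fin_cases i <;> simp only [Fin.isValue, Fin.zero_eta, Fin.mk_one, Fin.reduceFinMk,
      Matrix.cons_val] at h
    · exact (pow_pos hρ 2).ne (by simpa [h] using hccc.g11 p hp)
    · exact (pow_pos hρ 2).ne (by simpa [h] using hccc.g22 p hp)
    · simpa [h] using hccc.nu_unit p hp
  have horth :
      Pairwise fun i j => ⟪![pd1 f p, pd2 f p, ν p] i, ![pd1 f p, pd2 f p, ν p] j⟫ = 0 := by
    intro i j hij
    have g₁₂ := hccc.g12 p hp
    have n₁ := hccc.nu_f1 p hp
    have n₂ := hccc.nu_f2 p hp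
    fin_cases i <;> fin_cases j <;> simp_all [real_inner_comm]
  refine ext_inner_of_pairwise_inner_eq_zero hb horth (by simp) fun i => ?_
  fin_cases i <;> assumption

theorem pd1_nu (hccc : IsCCC Ω f ν ρ κ₁ κ₂) (hΩ : IsOpen Ω) (hp : p ∈ Ω) :
    pd1 ν p = -κ₁ p • pd1 f p := by
  have dν := hccc.smooth_ν.differentiableAt_of_isOpen hΩ hp
  have df₁ := (hccc.smooth_f.pd1 hΩ).differentiableAt_of_isOpen hΩ hp
  have df₂ := (hccc.smooth_f.pd2 hΩ).differentiableAt_of_isOpen hΩ hp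
  have e₁ : ⟪ν p, pd1 (pd1 f) p⟫ + ⟪pd1 ν p, pd1 f p⟫ = 0 :=
    fderiv_inner_apply_of_eqOn_const hΩ hp dν df₁ hccc.nu_f1 (1, 0)
  have e₂ : ⟪ν p, pd1 (pd2 f) p⟫ + ⟪pd1 ν p, pd2 f p⟫ = 0 :=
    fderiv_inner_apply_of_eqOn_const hΩ hp dν df₂ hccc.nu_f2 (1, 0)
  have e₃ : ⟪ν p, pd1 ν p⟫ + ⟪pd1 ν p, ν p⟫ = 0 :=
    fderiv_inner_apply_of_eqOn_const hΩ hp dν dν hccc.nu_unit (1, 0)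
  rw [real_inner_comm _ (pd1 ν p)] at e₁ e₂ e₃
  refine hccc.ext_frame hp ?_ ?_ ?_ <;> rw [real_inner_smul_right]
  · rw [hccc.g11 p hp]; linarith [hccc.h11 p hp]
  · rw [real_inner_comm (pd1 f p), hccc.g12 p hp]; linarith [hccc.h12 p hp]
  · rw [hccc.nu_f1 p hp]; linarith

theorem pd2_nu (hccc : IsCCC Ω f ν ρ κ₁ κ₂) (hΩ : IsOpen Ω) (hp : p ∈ Ω) :
    pd2 ν p = -κ₂ p • pd2 f p := by
  simpa [pd1_comp_swap] using
    (hccc.swap hΩ).pd1_nu (hΩ.preimage continuous_swap) (p := p.swap) (by simpa using hp)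

theorem inner_pd1_f_pd1_pd1_f (hccc : IsCCC Ω f ν ρ κ₁ κ₂) (hΩ : IsOpen Ω) (hp : p ∈ Ω) :
    ⟪pd1 f p, pd1 (pd1 f) p⟫ = ρ p * pd1 ρ p :=
  inner_fderiv_apply_of_eqOn_sq hΩ hp
    ((hccc.smooth_f.pd1 hΩ).differentiableAt_of_isOpen hΩ hp)
    (hccc.smooth_ρ.differentiableAt_of_isOpen hΩ hp) hccc.g11 (1, 0)

theorem inner_pd2_f_pd1_pd2_f (hccc : IsCCC Ω f ν ρ κ₁ κ₂) (hΩ : IsOpen Ω) (hp : p ∈ Ω) :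
    ⟪pd2 f p, pd1 (pd2 f) p⟫ = ρ p * pd1 ρ p :=
  inner_fderiv_apply_of_eqOn_sq hΩ hp
    ((hccc.smooth_f.pd2 hΩ).differentiableAt_of_isOpen hΩ hp)
    (hccc.smooth_ρ.differentiableAt_of_isOpen hΩ hp) hccc.g22 (1, 0)

theorem inner_pd1_f_pd2_pd2_f (hccc : IsCCC Ω f ν ρ κ₁ κ₂) (hΩ : IsOpen Ω) (hp : p ∈ Ω) :
    ⟪pd1 f p, pd2 (pd2 f) p⟫ = -(ρ p * pd1 ρ p) := by
  have h : ⟪pd1 f p, pd2 (pd2 f) p⟫ + ⟪pd2 (pd1 f) p, pd2 f p⟫ = 0 :=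
    fderiv_inner_apply_of_eqOn_const hΩ hp
      ((hccc.smooth_f.pd1 hΩ).differentiableAt_of_isOpen hΩ hp)
      ((hccc.smooth_f.pd2 hΩ).differentiableAt_of_isOpen hΩ hp) hccc.g12 (0, 1)
  rw [← pd1_pd2_comm hccc.smooth_f hΩ hp, real_inner_comm (pd2 f p),
    hccc.inner_pd2_f_pd1_pd2_f hΩ hp] at h
  linarith

theorem codazzi (hccc : IsCCC Ω f ν ρ κ₁ κ₂) (hΩ : IsOpen Ω) (hp : p ∈ Ω) :
    ρ p * pd1 κ₂ p = pd1 ρ p * (κ₁ p - κ₂ p) := by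
  have dν := hccc.smooth_ν.differentiableAt_of_isOpen hΩ hp
  have dρ := hccc.smooth_ρ.differentiableAt_of_isOpen hΩ hp
  have dκ₂ := hccc.smooth_κ₂.differentiableAt_of_isOpen hΩ hp
  have hA : ⟪ν p, pd1 (pd2 (pd2 f)) p⟫ + ⟪pd1 ν p, pd2 (pd2 f) p⟫
      = fderiv ℝ (fun q => ρ q ^ 2 * κ₂ q) p (1, 0) :=
    fderiv_inner_apply_of_eqOn hΩ hp dν
      (((hccc.smooth_f.pd2 hΩ).pd2 hΩ).differentiableAt_of_isOpen hΩ hp) hccc.h22 (1, 0)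
  have hB : ⟪ν p, pd2 (pd1 (pd2 f)) p⟫ + ⟪pd2 ν p, pd1 (pd2 f) p⟫ = 0 :=
    fderiv_inner_apply_of_eqOn_const hΩ hp dν
      (((hccc.smooth_f.pd2 hΩ).pd1 hΩ).differentiableAt_of_isOpen hΩ hp) hccc.h12 (0, 1)
  have hφ : fderiv ℝ (fun q => ρ q ^ 2 * κ₂ q) p (1, 0)
      = 2 * ρ p * pd1 ρ p * κ₂ p + ρ p ^ 2 * pd1 κ₂ p := by
    rw [fderiv_fun_mul (dρ.fun_pow 2) dκ₂, fderiv_fun_pow 2 dρ]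
    simp only [add_apply, smul_apply, nsmul_eq_mul, smul_eq_mul, pd1]
    ring
  rw [pd1_pd2_comm (hccc.smooth_f.pd2 hΩ) hΩ hp, hφ, hccc.pd1_nu hΩ hp, real_inner_smul_left,
    hccc.inner_pd1_f_pd2_pd2_f hΩ hp] at hA
  rw [hccc.pd2_nu hΩ hp, real_inner_smul_left, hccc.inner_pd2_f_pd1_pd2_f hΩ hp] at hB
  have h : ρ p * (ρ p * pd1 κ₂ p - pd1 ρ p * (κ₁ p - κ₂ p)) = 0 := by
    linear_combination hB - hA
  exact sub_eq_zero.1 ((mul_eq_zero.1 h).resolve_left (hccc.ρ_pos p hp).ne')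

theorem pd1_pd1_nu (hccc : IsCCC Ω f ν ρ κ₁ κ₂) (hΩ : IsOpen Ω) (hp : p ∈ Ω) :
    pd1 (pd1 ν) p = -(pd1 κ₁ p • pd1 f p + κ₁ p • pd1 (pd1 f) p) := by
  have h : pd1 (pd1 ν) p = fderiv ℝ (fun q => -κ₁ q • pd1 f q) p (1, 0) :=
    congrArg (· (1, 0)) (fderiv_eq_of_eqOn hΩ hp fun q hq => hccc.pd1_nu hΩ hq)
  rw [h, fderiv_fun_smul (hccc.smooth_κ₁.differentiableAt_of_isOpen hΩ hp).fun_neg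
    ((hccc.smooth_f.pd1 hΩ).differentiableAt_of_isOpen hΩ hp), fderiv_fun_neg]
  simp only [add_apply, smul_apply, ContinuousLinearMap.smulRight_apply, neg_apply, pd1]
  module

theorem pd2_pd2_nu (hccc : IsCCC Ω f ν ρ κ₁ κ₂) (hΩ : IsOpen Ω) (hp : p ∈ Ω) :
    pd2 (pd2 ν) p = -(pd2 κ₂ p • pd2 f p + κ₂ p • pd2 (pd2 f) p) := by
  simpa [pd1_comp_swap] using
    (hccc.swap hΩ).pd1_pd1_nu (hΩ.preimage continuous_swap) (p := p.swap) (by simpa using hp)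

theorem inner_pd1_f_laplacian_nu (hccc : IsCCC Ω f ν ρ κ₁ κ₂) (hΩ : IsOpen Ω) {c : ℝ}
    (hH : ∀ q ∈ Ω, κ₁ q + κ₂ q = c) (hp : p ∈ Ω) :
    ⟪pd1 f p, pd1 (pd1 ν) p + pd2 (pd2 ν) p⟫ = 0 := by
  have hH' : pd1 κ₁ p + pd1 κ₂ p = 0 := by
    have h := fderiv_eq_of_eqOn hΩ hp hH
    rw [fderiv_fun_add (hccc.smooth_κ₁.differentiableAt_of_isOpen hΩ hp)
      (hccc.smooth_κ₂.differentiableAt_of_isOpen hΩ hp), fderiv_const_apply] at h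
    show fderiv ℝ κ₁ p (1, 0) + fderiv ℝ κ₂ p (1, 0) = 0
    simpa using congrArg (· (1, 0)) h
  rw [inner_add_right, hccc.pd1_pd1_nu hΩ hp, hccc.pd2_pd2_nu hΩ hp]
  simp only [inner_neg_right, inner_add_right, real_inner_smul_right]
  rw [hccc.g11 p hp, hccc.g12 p hp, hccc.inner_pd1_f_pd1_pd1_f hΩ hp,
    hccc.inner_pd1_f_pd2_pd2_f hΩ hp]
  linear_combination ρ p * hccc.codazzi hΩ hp - ρ p ^ 2 * hH'

theorem inner_pd2_f_laplacian_nu (hccc : IsCCC Ω f ν ρ κ₁ κ₂) (hΩ : IsOpen Ω) {c : ℝ}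
    (hH : ∀ q ∈ Ω, κ₁ q + κ₂ q = c) (hp : p ∈ Ω) :
    ⟪pd2 f p, pd1 (pd1 ν) p + pd2 (pd2 ν) p⟫ = 0 := by
  have h := (hccc.swap hΩ).inner_pd1_f_laplacian_nu (hΩ.preimage continuous_swap)
    (fun q hq => (add_comm _ _).trans (hH _ hq)) (p := p.swap) (by simpa using hp)
  simpa [pd1_comp_swap, pd2_comp_swap, add_comm] using h

theorem laplacian_nu (hccc : IsCCC Ω f ν ρ κ₁ κ₂) (hΩ : IsOpen Ω) {c : ℝ}
    (hH : ∀ q ∈ Ω, κ₁ q + κ₂ q = c) (hp : p ∈ Ω) :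
    pd1 (pd1 ν) p + pd2 (pd2 ν) p = -(ρ p ^ 2 * (κ₁ p ^ 2 + κ₂ p ^ 2)) • ν p := by
  refine hccc.ext_frame hp ?_ ?_ ?_ <;> rw [real_inner_smul_right]
  · rw [hccc.inner_pd1_f_laplacian_nu hΩ hH hp, real_inner_comm, hccc.nu_f1 p hp, mul_zero]
  · rw [hccc.inner_pd2_f_laplacian_nu hΩ hH hp, real_inner_comm, hccc.nu_f2 p hp, mul_zero]
  · rw [hccc.pd1_pd1_nu hΩ hp, hccc.pd2_pd2_nu hΩ hp]
    simp only [inner_add_right, inner_neg_right, real_inner_smul_right]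
    rw [hccc.nu_f1 p hp, hccc.nu_f2 p hp, hccc.h11 p hp, hccc.h22 p hp, hccc.nu_unit p hp]
    ring

end IsCCC

theorem d_d_u_nu_J0_general (Ω : Set (ℝ × ℝ)) (hΩ : IsOpen Ω)
    (f ν : ℝ × ℝ → EuclideanSpace ℝ (Fin 3)) (ρ κ₁ κ₂ : ℝ × ℝ → ℝ)
    (hccc : IsCCC Ω f ν ρ κ₁ κ₂)
    (hH : ∃ c : ℝ, ∀ p ∈ Ω, κ₁ p + κ₂ p = c)
    (u : ℝ × ℝ → ℝ) (hu : ContDiffOn ℝ ∞ u Ω)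
    (hjacobi : ∀ p ∈ Ω,
      pd1 (pd1 u) p + pd2 (pd2 u) p + ρ p ^ 2 * (κ₁ p ^ 2 + κ₂ p ^ 2) * u p = 0) :
    ∀ p ∈ Ω,
      -(pd1 (pd1 (fun q => u q • ν q)) p + pd2 (pd2 (fun q => u q • ν q)) p)
        = (2 * κ₁ p * pd1 u p) • pd1 f p + (2 * κ₂ p * pd2 u p) • pd2 f p
          + (2 * ρ p ^ 2 * (κ₁ p ^ 2 + κ₂ p ^ 2) * u p) • ν p := by
  intro p hp
  obtain ⟨c, hc⟩ := hH
  have h₁ : pd1 (pd1 fun q => u q • ν q) p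
      = pd1 (pd1 u) p • ν p + (2 * pd1 u p) • pd1 ν p + u p • pd1 (pd1 ν) p :=
    fderiv_fderiv_smul_apply hu hccc.smooth_ν hΩ hp (1, 0)
  have h₂ : pd2 (pd2 fun q => u q • ν q) p
      = pd2 (pd2 u) p • ν p + (2 * pd2 u p) • pd2 ν p + u p • pd2 (pd2 ν) p :=
    fderiv_fderiv_smul_apply hu hccc.smooth_ν hΩ hp (0, 1)
  rw [h₁, h₂, hccc.pd1_nu hΩ hp, hccc.pd2_nu hΩ hp]
  linear_combination (norm := module)
    (-u p) • hccc.laplacian_nu hΩ hc hp - hjacobi p hp • ν p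

/-- For a Jacobi field `u` on a CMC immersion in conformal curvature
coordinates, `−Δ₀(uν) = 2κ₁·∂₁u·∂₁f + 2κ₂·∂₂u·∂₂f + 2ρ²(κ₁² + κ₂²)·u·ν`. -/
theorem d_d_u_nu_J0 (Ω : Set (ℝ × ℝ)) (hΩ : IsOpen Ω) (hconn : IsConnected Ω)
    (f ν : ℝ × ℝ → EuclideanSpace ℝ (Fin 3)) (ρ κ₁ κ₂ : ℝ × ℝ → ℝ)
    (hccc : IsCCC Ω f ν ρ κ₁ κ₂)
    (hH : ∃ c : ℝ, ∀ p ∈ Ω, κ₁ p + κ₂ p = c)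
    (u : ℝ × ℝ → ℝ) (hu : ContDiffOn ℝ ∞ u Ω)
    (hjacobi : ∀ p ∈ Ω,
      pd1 (pd1 u) p + pd2 (pd2 u) p + ρ p ^ 2 * (κ₁ p ^ 2 + κ₂ p ^ 2) * u p = 0) :
    ∀ p ∈ Ω,
      -(pd1 (pd1 (fun q => u q • ν q)) p + pd2 (pd2 (fun q => u q • ν q)) p)
        = (2 * κ₁ p * pd1 u p) • pd1 f p + (2 * κ₂ p * pd2 u p) • pd2 f p
          + (2 * ρ p ^ 2 * (κ₁ p ^ 2 + κ₂ p ^ 2) * u p) • ν p :=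
  d_d_u_nu_J0_general Ω hΩ f ν ρ κ₁ κ₂ hccc hH u hu hjacobi
end

section
/- Let Ω ⊆ ℝ² be open, let f : Ω → ℝ³ be twice continuously differentiable, and let ε : Ω → ℝ³ be a twice continuously differentiable map satisfying ∂₁ε = 2ε × ∂₂f and ∂₂ε = −2ε × ∂₁f on Ω. Then at every point of Ω one has ε × (2·(∂₁f × ∂₂f) − (∂₁∂₁f + ∂₂∂₂f)) = 0. -/
open scoped RealInnerProductSpace ContDiff

/-- The standard cross product on `ℝ³`. -/
def cross3 (a b : EuclideanSpace ℝ (Fin 3)) : EuclideanSpace ℝ (Fin 3) := WithLp.toLp 2 (crossProduct a b)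

/-!
The system prescribes both first partials of `ε`, so it is constrained by the symmetry
`∂₂∂₁ε = ∂₁∂₂ε` of the second derivative of the `C²` map `ε`. Expanding both sides by the
Leibniz rule and substituting the system again gives
`ε × (∂₁∂₁f + ∂₂∂₂f) = 2 ((ε × ∂₁f) × ∂₂f - (ε × ∂₂f) × ∂₁f)`,
and by the Jacobi identity the right-hand side is `2 ε × (∂₁f × ∂₂f)`.
-/

open Topology

local notation "ℝ³" => EuclideanSpace ℝ (Fin 3)

lemma cross3_add_left (a b c : ℝ³) : cross3 (a + b) c = cross3 a c + cross3 b c := by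
  simp [cross3]

lemma cross3_smul_left (r : ℝ) (a c : ℝ³) : cross3 (r • a) c = r • cross3 a c := by
  simp [cross3]

lemma cross3_add_right (a b c : ℝ³) : cross3 a (b + c) = cross3 a b + cross3 a c := by
  simp [cross3]

lemma cross3_smul_right (r : ℝ) (a c : ℝ³) : cross3 a (r • c) = r • cross3 a c := by
  simp [cross3]

lemma cross3_sub_right (a b c : ℝ³) : cross3 a (b - c) = cross3 a b - cross3 a c := by
  simp [cross3]

noncomputable def crossCLM : ℝ³ →L[ℝ] ℝ³ →L[ℝ] ℝ³ :=
  LinearMap.toContinuousLinearMap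
    (LinearMap.toContinuousLinearMap.toLinearMap ∘ₗ
      LinearMap.mk₂ ℝ cross3 cross3_add_left cross3_smul_left cross3_add_right cross3_smul_right)

lemma crossCLM_apply (a b : ℝ³) : crossCLM a b = cross3 a b := rfl

lemma cross3_cross3_sub_cross3_cross3 (a u v : ℝ³) :
    cross3 (cross3 a u) v - cross3 (cross3 a v) u = cross3 a (cross3 u v) := by
  simp only [cross3, WithLp.ofLp_toLp, leibniz_cross a.ofLp,
    ← cross_anticomm (crossProduct a.ofLp v.ofLp), WithLp.toLp_add, WithLp.toLp_neg]
  abel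

lemma cross3_integrability_condition {a e₁ e₂ f₁ f₂ f₁₁ f₂₂ : ℝ³}
    (he₁ : e₁ = (2 : ℝ) • cross3 a f₂) (he₂ : e₂ = -((2 : ℝ) • cross3 a f₁))
    (hmix : (2 : ℝ) • (cross3 e₂ f₂ + cross3 a f₂₂) = (-2 : ℝ) • (cross3 e₁ f₁ + cross3 a f₁₁)) :
    cross3 a ((2 : ℝ) • cross3 f₁ f₂ - (f₁₁ + f₂₂)) = 0 := by
  rw [he₁, he₂, ← neg_smul, cross3_smul_left, cross3_smul_left] at hmix
  rw [cross3_sub_right, cross3_smul_right, cross3_add_right, ← cross3_cross3_sub_cross3_cross3]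
  linear_combination (norm := module) (-1 / 2 : ℝ) • hmix

section Derivatives

variable {E F : Type*} [NormedAddCommGroup E] [NormedSpace ℝ E]
  [NormedAddCommGroup F] [NormedSpace ℝ F]

lemma ContDiffAt.differentiableAt_fderiv {g : E → F} {p : E} (hg : ContDiffAt ℝ 2 g p) :
    DifferentiableAt ℝ (fderiv ℝ g) p :=
  (hg.fderiv_right (m := 1) le_rfl).differentiableAt one_ne_zero

lemma ContDiffAt.differentiableAt_fderiv_apply {g : E → F} {p : E} (hg : ContDiffAt ℝ 2 g p)
    (v : E) : DifferentiableAt ℝ (fun q => fderiv ℝ g q v) p :=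
  hg.differentiableAt_fderiv.clm_apply (differentiableAt_const v)

lemma fderiv_fderiv_apply {g : E → F} {p : E} (hg : DifferentiableAt ℝ (fderiv ℝ g) p)
    (v w : E) : fderiv ℝ (fun q => fderiv ℝ g q v) p w = fderiv ℝ (fderiv ℝ g) p w v := by
  simp [fderiv_clm_apply hg (differentiableAt_const v)]

lemma ContDiffAt.fderiv_fderiv_apply_comm {g : E → F} {p : E} (hg : ContDiffAt ℝ 2 g p)
    (v w : E) :
    fderiv ℝ (fun q => fderiv ℝ g q v) p w = fderiv ℝ (fun q => fderiv ℝ g q w) p v := by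
  have hd := hg.differentiableAt_fderiv
  rw [fderiv_fderiv_apply hd, fderiv_fderiv_apply hd]
  exact hg.isSymmSndFDerivAt (by simp) w v

lemma fderiv_smul_cross3_apply (c : ℝ) {u w : E → ℝ³} {p : E} (hu : DifferentiableAt ℝ u p)
    (hw : DifferentiableAt ℝ w p) (v : E) :
    fderiv ℝ (fun q => c • cross3 (u q) (w q)) p v =
      c • (cross3 (fderiv ℝ u p v) (w p) + cross3 (u p) (fderiv ℝ w p v)) := by
  have h := congrArg (fun L => L v) ((c • crossCLM).fderiv_of_bilinear hu hw)
  simp only [ContinuousLinearMap.precompR_apply, ContinuousLinearMap.precompL_apply,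
    ContinuousLinearMap.compL_apply, ContinuousLinearMap.comp_apply, add_apply, smul_apply,
    map_smul, crossCLM_apply] at h
  rw [h, smul_add, add_comm]

end Derivatives

/-- A (nonzero-able) solution of the homogeneous spinning sphere system
forces `ε × (2·∂₁f × ∂₂f − Δ₀f) = 0` pointwise. -/
theorem integrability_necessary_condition (Ω : Set (ℝ × ℝ)) (hΩ : IsOpen Ω)
    (f : ℝ × ℝ → EuclideanSpace ℝ (Fin 3)) (hf : ContDiffOn ℝ 2 f Ω)
    (ε : ℝ × ℝ → EuclideanSpace ℝ (Fin 3)) (hε : ContDiffOn ℝ 2 ε Ω)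
    (hε1 : ∀ p ∈ Ω, pd1 ε p = (2 : ℝ) • cross3 (ε p) (pd2 f p))
    (hε2 : ∀ p ∈ Ω, pd2 ε p = -((2 : ℝ) • cross3 (ε p) (pd1 f p))) :
    ∀ p ∈ Ω,
      cross3 (ε p)
        ((2 : ℝ) • cross3 (pd1 f p) (pd2 f p) - (pd1 (pd1 f) p + pd2 (pd2 f) p)) = 0 := by
  intro p hp
  have hΩp : Ω ∈ 𝓝 p := hΩ.mem_nhds hp
  have hfp := hf.contDiffAt hΩp
  have hεp := hε.contDiffAt hΩp
  have h1 : pd1 ε =ᶠ[𝓝 p] fun q => (2 : ℝ) • cross3 (ε q) (pd2 f q) :=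
    Filter.eventually_of_mem hΩp hε1
  have h2 : pd2 ε =ᶠ[𝓝 p] fun q => (-2 : ℝ) • cross3 (ε q) (pd1 f q) :=
    Filter.eventually_of_mem hΩp fun q hq => (hε2 q hq).trans (neg_smul _ _).symm
  have hmix : fderiv ℝ (pd1 ε) p (0, 1) = fderiv ℝ (pd2 ε) p (1, 0) :=
    hεp.fderiv_fderiv_apply_comm (1, 0) (0, 1)
  have hεd : DifferentiableAt ℝ ε p := hεp.differentiableAt two_ne_zero
  rw [h1.fderiv_eq, h2.fderiv_eq,
    fderiv_smul_cross3_apply (w := pd2 f) _ hεd (hfp.differentiableAt_fderiv_apply _),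
    fderiv_smul_cross3_apply (w := pd1 f) _ hεd (hfp.differentiableAt_fderiv_apply _)] at hmix
  exact cross3_integrability_condition (hε1 p hp) (hε2 p hp) hmix
end
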